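/- If the set system 𝓛^{<ω} of finite nonempty unions of members of 𝓛 has an infinite bad learning sequence, then the powerset ordering (P(⋃𝓛), ⪯∀∃) induced by qo(𝓛) is not a WQO. -/

import Mathlib

/-!
The singletons `{t n}` of a bad learning sequence `⟨t n, A (n + 1)⟩` of `𝓛^{<ω}` form a bad
sequence for `⪯∀∃`. Indeed `{t i} ⪯∀∃ {t j}` means `t i ⪯ t j`, and every finite union of members
of `𝓛` is upward closed for `⪯`; so for `i < j` the union `A (j - 1)`, which contains `t i`,
would contain `t j` as well.
-/

section

variable {T : Type*}

/-- The quasi-order `qo(𝓛)`. -/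
def qoLE (𝓛 : Set (Set T)) (x y : T) : Prop :=
  ∀ L ∈ 𝓛, x ∈ L → y ∈ L

/-- The set system `𝓛^{<ω}`. -/
def finiteUnions (𝓛 : Set (Set T)) : Set (Set T) :=
  {U | ∃ 𝓜 : Set (Set T), 𝓜 ⊆ 𝓛 ∧ 𝓜.Nonempty ∧ 𝓜.Finite ∧ U = ⋃₀ 𝓜}

/-- `A i` plays the role of the paper's `A_{i+1}`. -/
def IsBadLearningSeq (𝓝 : Set (Set T)) (t : ℕ → T) (A : ℕ → Set T) : Prop :=
  ∀ i, A i ∈ 𝓝 ∧ (∀ j ≤ i, t j ∈ A i) ∧ t (i + 1) ∉ A i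

lemma mem_sUnion_of_qoLE {𝓛 𝓜 : Set (Set T)} (h𝓜 : 𝓜 ⊆ 𝓛) {x y : T} (hx : x ∈ ⋃₀ 𝓜)
    (hxy : qoLE 𝓛 x y) : y ∈ ⋃₀ 𝓜 := by
  obtain ⟨L, hL, hxL⟩ := hx
  exact ⟨L, hL, hxy L (h𝓜 hL) hxL⟩

lemma mem_of_qoLE_of_mem_finiteUnions {𝓛 : Set (Set T)} {U : Set T} (hU : U ∈ finiteUnions 𝓛)
    {x y : T} (hx : x ∈ U) (hxy : qoLE 𝓛 x y) : y ∈ U := by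
  obtain ⟨𝓜, h𝓜, -, -, rfl⟩ := hU
  exact mem_sUnion_of_qoLE h𝓜 hx hxy

lemma subset_sUnion_of_mem_finiteUnions {𝓛 : Set (Set T)} {U : Set T}
    (hU : U ∈ finiteUnions 𝓛) : U ⊆ ⋃₀ 𝓛 := by
  obtain ⟨𝓜, h𝓜, -, -, rfl⟩ := hU
  exact Set.sUnion_mono h𝓜

lemma IsBadLearningSeq.not_qoLE {𝓛 𝓝 : Set (Set T)}
    (hup : ∀ N ∈ 𝓝, ∀ x y, x ∈ N → qoLE 𝓛 x y → y ∈ N) {t : ℕ → T} {A : ℕ → Set T}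
    (hbad : IsBadLearningSeq 𝓝 t A) {i j : ℕ} (hij : i < j) : ¬ qoLE 𝓛 (t i) (t j) := by
  intro hle
  obtain ⟨hA, hmem, hnot⟩ := hbad (j - 1)
  rw [Nat.sub_add_cancel (Nat.one_le_of_lt hij)] at hnot
  exact hnot (hup _ hA _ _ (hmem i (by omega)) hle)

end

/-- If `𝓛^{<ω}` (finite nonempty unions of members of `𝓛`) has an infinite bad learning
sequence, then the powerset ordering `⪯∀∃` induced by `qo(𝓛)` is not a WQO. -/
theorem powerset_not_wqo_of_bad_sequence {T : Type*} (𝓛 : Set (Set T))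
    (hbad : ∃ (t : ℕ → T) (A : ℕ → Set T),
      ∀ i, (A i ∈ {U : Set T | ∃ 𝓜 : Set (Set T),
          𝓜 ⊆ 𝓛 ∧ 𝓜.Nonempty ∧ 𝓜.Finite ∧ U = ⋃₀ 𝓜}) ∧
        (∀ j ≤ i, t j ∈ A i) ∧ t (i + 1) ∉ A i) :
    ¬ ∀ v : ℕ → Set T, (∀ n, v n ⊆ ⋃₀ 𝓛) →
      ∃ i j, i < j ∧ ∀ x' ∈ v j, ∃ x ∈ v i, ∀ L ∈ 𝓛, x ∈ L → x' ∈ L := by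
  obtain ⟨t, A, hA⟩ := hbad
  have hA : IsBadLearningSeq (finiteUnions 𝓛) t A := hA
  intro hwqo
  obtain ⟨i, j, hij, hle⟩ := hwqo (fun n => {t n}) fun n =>
    Set.singleton_subset_iff.2 <|
      subset_sUnion_of_mem_finiteUnions (hA n).1 ((hA n).2.1 n le_rfl)
  obtain ⟨x, rfl, hx⟩ := hle (t j) rfl
  exact hA.not_qoLE (fun _ hN _ _ => mem_of_qoLE_of_mem_finiteUnions hN) hij hx
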